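/- For 0 ≤ h, j ≤ D the following are equivalent: (i) |h − j| ≠ 1; (ii) E_h A^ε E_j = 0; (iii) E*_h A^ε E*_j = 0; (iv) E^ε_h A E^ε_j = 0; (v) E^ε_h A* E^ε_j = 0. -/

import Mathlib

noncomputable section

open Matrix Finset

/-- Vertex set of the hypercube `Q_D`: binary strings of length `D`. -/
abbrev Vtx (D : ℕ) := Fin D → Bool

/-- Hamming weight of a vertex, i.e. its distance to the fixed vertex `x = (0,...,0)`. -/
def wt {D : ℕ} (y : Vtx D) : ℕ := (Finset.univ.filter fun k => y k = true).card

/-- The adjacency matrix of the hypercube `Q_D`: `A_{yz} = 1` iff `y,z` differ in exactly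
one coordinate. -/
def adjMat (D : ℕ) : Matrix (Vtx D) (Vtx D) ℂ :=
  fun y z => if (Finset.univ.filter fun k => y k ≠ z k).card = 1 then 1 else 0

/-- The dual adjacency matrix of `Q_D` with respect to `x = (0,...,0)`: the diagonal
matrix with `(y,y)`-entry `D - 2·wt(y)`. -/
def dualAdjMat (D : ℕ) : Matrix (Vtx D) (Vtx D) ℂ :=
  Matrix.diagonal fun y => (D : ℂ) - 2 * (wt y : ℂ)

/-- The imaginary adjacency matrix `Aᵉ = -i(AA* - A*A)/2`. -/
def imagAdjMat (D : ℕ) : Matrix (Vtx D) (Vtx D) ℂ :=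
  (-Complex.I / 2) • (adjMat D * dualAdjMat D - dualAdjMat D * adjMat D)

/-- The 2×2 matrix `P₁` with entries `(P₁)₀₀ = 1`, `(P₁)₀₁ = 1`, `(P₁)₁₀ = -i`,
`(P₁)₁₁ = i`. -/
def P1 : Bool → Bool → ℂ
  | false, false => 1
  | false, true  => 1
  | true,  false => -Complex.I
  | true,  true  => Complex.I

/-- The D-fold Kronecker power `P = P₁^{⊗D}`, i.e. `P_{yz} = ∏_k (P₁)_{y_k z_k}`. -/
def Pmat (D : ℕ) : Matrix (Vtx D) (Vtx D) ℂ :=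
  fun y z => ∏ k : Fin D, P1 (y k) (z k)

/-- The eigenvalues `θ_j = D - 2j`. -/
def theta (D j : ℕ) : ℂ := (D : ℂ) - 2 * (j : ℂ)

/-- The `i`-th primitive idempotent `E_i = ∏_{0 ≤ j ≤ D, j ≠ i} (A - θ_j I)/(θ_i - θ_j)`. -/
def Emat (D i : ℕ) : Matrix (Vtx D) (Vtx D) ℂ :=
  Polynomial.aeval (adjMat D)
    (∏ j ∈ (Finset.range (D + 1)).erase i,
      Polynomial.C ((theta D i - theta D j)⁻¹) * (Polynomial.X - Polynomial.C (theta D j)))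

/-- The `i`-th dual idempotent `E*_i`: diagonal with `(y,y)`-entry `1` if `wt(y) = i`. -/
def EstarMat (D i : ℕ) : Matrix (Vtx D) (Vtx D) ℂ :=
  Matrix.diagonal fun y => if wt y = i then 1 else 0

/-- The `i`-th imaginary idempotent `Eᵉ_i = P⁻¹ E_i P`. -/
def EepsMat (D i : ℕ) : Matrix (Vtx D) (Vtx D) ℂ :=
  (Pmat D)⁻¹ * Emat D i * Pmat D

/-- `W` is a `T`-module: a subspace of `ℂ^X` invariant under `A` and `A*`. -/
def IsTMod (D : ℕ) (W : Submodule ℂ (Vtx D → ℂ)) : Prop :=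
  (∀ w ∈ W, (adjMat D).mulVec w ∈ W) ∧ (∀ w ∈ W, (dualAdjMat D).mulVec w ∈ W)

/-- `W` is an irreducible `T`-module. -/
def IsIrredTMod (D : ℕ) (W : Submodule ℂ (Vtx D → ℂ)) : Prop :=
  IsTMod D W ∧ W ≠ ⊥ ∧
    ∀ U : Submodule ℂ (Vtx D → ℂ), IsTMod D U → U ≤ W → U = ⊥ ∨ U = W

/-- The Hermitian inner product `⟨u,v⟩ = uᵗ · conj v` (linear in the first argument). -/
def inp {D : ℕ} (u v : Vtx D → ℂ) : ℂ := ∑ y, u y * (starRingEnd ℂ) (v y)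

/-!
Conjugation by `P` permutes `(A, Aᵉ, A*)` cyclically: `P⁻¹AP = Aᵉ`, `P⁻¹AᵉP = A*` and
`P⁻¹A*P = A`. Since `P` is a Kronecker power and `A`, `A*` act one coordinate at a time, each of
these reduces to a `2 × 2` identity for `P₁`. The idempotents `E_i`, `Eᵉ_i`, `E*_i` are one and the
same Lagrange polynomial evaluated at `A`, `Aᵉ`, `A*`, so conjugating by `P` once or twice turns
each of the products in (ii), (iv), (v) into `E*_h A E*_j` or `E*_h Aᵉ E*_j`. These vanish iff no
edge joins a vertex of weight `h` to one of weight `j`, i.e. iff `|h - j| ≠ 1`; for `Aᵉ` this uses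
`Aᵉ_{yz} = -i (wt y - wt z) A_{yz}`, so that `Aᵉ` and `A` have the same support.
-/

section KroneckerPower

variable {ι α R : Type*} [Fintype ι] [CommSemiring R]

def kronPow (f : Matrix α α R) : Matrix (ι → α) (ι → α) R :=
  fun y z => ∏ k, f (y k) (z k)

theorem kronPow_mul [DecidableEq ι] [Fintype α] (f g : Matrix α α R) :
    (kronPow f : Matrix (ι → α) (ι → α) R) * kronPow g = kronPow (f * g) := by
  ext y z
  simp only [Matrix.mul_apply, kronPow, Finset.prod_univ_sum, Fintype.piFinset_univ,
    Finset.prod_mul_distrib]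

theorem kronPow_one [DecidableEq α] :
    (kronPow (1 : Matrix α α R) : Matrix (ι → α) (ι → α) R) = 1 := by
  ext y z
  by_cases hyz : y = z
  · subst hyz
    simp [kronPow]
  · obtain ⟨k, hk⟩ := Function.ne_iff.mp hyz
    simp only [kronPow, Matrix.one_apply_ne hyz]
    exact Finset.prod_eq_zero (Finset.mem_univ k) (Matrix.one_apply_ne hk)

end KroneckerPower

def P1inv : Matrix Bool Bool ℂ
  | false, false => 1 / 2
  | false, true  => Complex.I / 2
  | true,  false => 1 / 2
  | true,  true  => -Complex.I / 2

theorem P1_mul_P1inv : Matrix.of P1 * P1inv = 1 := by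
  ext a b
  cases a <;> cases b <;> simp [Matrix.mul_apply, P1, P1inv, neg_div, mul_div_assoc'] <;> ring

theorem Pmat_eq_kronPow (D : ℕ) : Pmat D = kronPow (Matrix.of P1) := rfl

def PmatUnit (D : ℕ) : (Matrix (Vtx D) (Vtx D) ℂ)ˣ where
  val := Pmat D
  inv := kronPow P1inv
  val_inv := by rw [Pmat_eq_kronPow, kronPow_mul, P1_mul_P1inv, kronPow_one]
  inv_val := by rw [Pmat_eq_kronPow, kronPow_mul, mul_eq_one_comm.mp P1_mul_P1inv, kronPow_one]

def conjPmat (D : ℕ) : Matrix (Vtx D) (Vtx D) ℂ ≃ₐ[ℂ] Matrix (Vtx D) (Vtx D) ℂ :=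
  MulSemiringAction.toAlgEquiv ℂ _ (ConjAct.toConjAct (PmatUnit D)⁻¹)

theorem conjPmat_apply (D : ℕ) (M : Matrix (Vtx D) (Vtx D) ℂ) :
    conjPmat D M = (Pmat D)⁻¹ * M * Pmat D := by
  change _ = (PmatUnit D : Matrix (Vtx D) (Vtx D) ℂ)⁻¹ * M * PmatUnit D
  rw [← Matrix.coe_units_inv]
  simp [conjPmat, ConjAct.units_smul_def]

theorem conjPmat_eq_iff {D : ℕ} {M N : Matrix (Vtx D) (Vtx D) ℂ} :
    conjPmat D M = N ↔ M * Pmat D = Pmat D * N := by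
  rw [conjPmat_apply]
  change (PmatUnit D : Matrix (Vtx D) (Vtx D) ℂ)⁻¹ * M * PmatUnit D = N ↔
    M * PmatUnit D = PmatUnit D * N
  rw [← Matrix.coe_units_inv, mul_assoc, Units.inv_mul_eq_iff_eq_mul]

theorem conjPmat_Emat (D i : ℕ) : conjPmat D (Emat D i) = EepsMat D i := by
  rw [conjPmat_apply]
  rfl

def spin (b : Bool) : ℂ := if b then -1 else 1

theorem spin_mul_self (b : Bool) : spin b * spin b = 1 := by
  cases b <;> norm_num [spin]

theorem sum_spin {D : ℕ} (y : Vtx D) : ∑ k, spin (y k) = D - 2 * (wt y : ℂ) := by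
  have hspin : ∀ k, spin (y k) = 1 - 2 * if y k = true then 1 else 0 := by
    intro k; cases y k <;> norm_num [spin]
  simp only [hspin, Finset.sum_sub_distrib, ← Finset.mul_sum, Finset.sum_boole, wt]
  simp

def flipAt {D : ℕ} (y : Vtx D) (k : Fin D) : Vtx D := Function.update y k (!y k)

section Flip

variable {D : ℕ} (y : Vtx D) (k : Fin D)

@[simp] theorem flipAt_apply_self : flipAt y k k = !y k := by simp [flipAt]

theorem flipAt_apply_of_ne {l : Fin D} (hl : l ≠ k) : flipAt y k l = y l := by
  simp [flipAt, hl]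

@[simp] theorem flipAt_flipAt : flipAt (flipAt y k) k = y := by
  simp [flipAt]

theorem flipAt_injective : Function.Injective (flipAt y) := by
  intro k l hkl
  by_contra hne
  have := congrFun hkl k
  rw [flipAt_apply_self, flipAt_apply_of_ne y l hne] at this
  cases y k <;> simp at this

theorem wt_flipAt_of_false (hk : y k = false) : wt (flipAt y k) = wt y + 1 := by
  have hset : (Finset.univ.filter fun l => flipAt y k l = true)
      = insert k (Finset.univ.filter fun l => y l = true) := by
    ext l
    by_cases hl : l = k
    · subst hl; simp [hk]
    · simp [flipAt_apply_of_ne y k hl, hl]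
  rw [wt, hset, Finset.card_insert_of_notMem (by simp [hk]), wt]

theorem wt_flipAt_of_true (hk : y k = true) : wt (flipAt y k) + 1 = wt y := by
  simpa using (wt_flipAt_of_false (flipAt y k) k (by simp [hk])).symm

theorem wt_flipAt : (wt (flipAt y k) : ℂ) = wt y + spin (y k) := by
  cases hk : y k
  · simp [wt_flipAt_of_false y k hk, spin]
  · rw [← wt_flipAt_of_true y k hk]; simp [spin]

theorem natAbs_wt_sub_wt_flipAt : ((wt y : ℤ) - wt (flipAt y k)).natAbs = 1 := by
  cases hk : y k
  · rw [wt_flipAt_of_false y k hk]; omega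
  · rw [← wt_flipAt_of_true y k hk]; omega

end Flip

theorem card_filter_ne_eq_one_iff {D : ℕ} (y z : Vtx D) :
    (Finset.univ.filter fun l => y l ≠ z l).card = 1 ↔ ∃ k, z = flipAt y k := by
  constructor
  · intro hcard
    obtain ⟨k, hk⟩ := Finset.card_eq_one.mp hcard
    refine ⟨k, funext fun l => ?_⟩
    have hl := Finset.ext_iff.mp hk l
    simp only [Finset.mem_filter, Finset.mem_univ, true_and, Finset.mem_singleton] at hl
    by_cases hlk : l = k
    · subst hlk
      rw [flipAt_apply_self]
      cases hy : y l <;> cases hz : z l <;> simp_all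
    · rw [flipAt_apply_of_ne y k hlk]
      exact (not_not.mp (mt hl.mp hlk)).symm
  · rintro ⟨k, rfl⟩
    rw [Finset.card_eq_one]
    refine ⟨k, Finset.ext fun l => ?_⟩
    by_cases hlk : l = k
    · subst hlk; simp
    · simp [flipAt_apply_of_ne y k hlk, hlk]

theorem adjMat_apply {D : ℕ} (y z : Vtx D) :
    adjMat D y z = if ∃ k, z = flipAt y k then 1 else 0 := by
  simp only [adjMat, card_filter_ne_eq_one_iff]

theorem adjMat_comm {D : ℕ} (y z : Vtx D) : adjMat D y z = adjMat D z y := by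
  simp only [adjMat, ne_comm]

theorem adjMat_apply_flipAt {D : ℕ} (y : Vtx D) (k : Fin D) : adjMat D y (flipAt y k) = 1 := by
  rw [adjMat_apply, if_pos ⟨k, rfl⟩]

theorem sum_adjMat_mul {D : ℕ} (y : Vtx D) (F : Vtx D → ℂ) :
    ∑ z, adjMat D y z * F z = ∑ k, F (flipAt y k) := by
  simp only [adjMat_apply, ite_mul, one_mul, zero_mul, Finset.sum_ite, Finset.sum_const_zero,
    add_zero]
  have hfilter :
      (Finset.univ.filter fun z => ∃ k, z = flipAt y k) = Finset.univ.image (flipAt y) := by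
    ext z; simp [eq_comm]
  rw [hfilter, Finset.sum_image fun k _ l _ hkl => flipAt_injective y hkl]

theorem Finset.prod_update_mul_self {ι M : Type*} [Fintype ι] [DecidableEq ι] [CommMonoid M]
    (g : ι → M) (k : ι) (c : M) : ∏ l, Function.update g k (c * g k) l = c * ∏ l, g l := by
  rw [Finset.prod_update_of_mem (Finset.mem_univ k), mul_assoc,
    ← Finset.prod_eq_mul_prod_sdiff_singleton_of_mem (Finset.mem_univ k) g]

theorem P1_not_right (a b : Bool) : P1 a (!b) = spin a * P1 a b := by
  cases a <;> cases b <;> simp [P1, spin]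

theorem P1_not_left (a b : Bool) : P1 (!a) b = -Complex.I * spin a * spin b * P1 a b := by
  cases a <;> cases b <;> simp [P1, spin]

theorem Pmat_flipAt_right {D : ℕ} (y z : Vtx D) (k : Fin D) :
    Pmat D y (flipAt z k) = spin (y k) * Pmat D y z := by
  simp only [Pmat, flipAt, Function.apply_update (fun l => P1 (y l)), P1_not_right,
    Finset.prod_update_mul_self]

theorem Pmat_flipAt_left {D : ℕ} (y z : Vtx D) (k : Fin D) :
    Pmat D (flipAt y k) z = -Complex.I * spin (y k) * spin (z k) * Pmat D y z := by
  simp only [Pmat, flipAt, Function.apply_update (fun l a => P1 a (z l)), P1_not_left,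
    Finset.prod_update_mul_self]

theorem imagAdjMat_apply {D : ℕ} (y z : Vtx D) :
    imagAdjMat D y z = -Complex.I * ((wt y : ℂ) - wt z) * adjMat D y z := by
  simp only [imagAdjMat, Matrix.smul_apply, Matrix.sub_apply, dualAdjMat,
    Matrix.mul_diagonal, Matrix.diagonal_mul, smul_eq_mul]
  ring

theorem conjPmat_adjMat (D : ℕ) : conjPmat D (adjMat D) = imagAdjMat D := by
  refine conjPmat_eq_iff.mpr (Matrix.ext fun y z => ?_)
  have hterm : ∀ w, Pmat D y w * imagAdjMat D w z =
      adjMat D z w * (-Complex.I * ((wt w : ℂ) - wt z) * Pmat D y w) := fun w => by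
    rw [imagAdjMat_apply, adjMat_comm w z]; ring
  rw [Matrix.mul_apply, Matrix.mul_apply, Finset.sum_congr rfl fun w _ => hterm w,
    sum_adjMat_mul, sum_adjMat_mul]
  refine Finset.sum_congr rfl fun k _ => ?_
  rw [Pmat_flipAt_left, Pmat_flipAt_right, wt_flipAt]
  ring

theorem conjPmat_imagAdjMat (D : ℕ) : conjPmat D (imagAdjMat D) = dualAdjMat D := by
  refine conjPmat_eq_iff.mpr (Matrix.ext fun y z => ?_)
  have hterm : ∀ w, imagAdjMat D y w * Pmat D w z =
      adjMat D y w * (-Complex.I * ((wt y : ℂ) - wt w) * Pmat D w z) := fun w => by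
    rw [imagAdjMat_apply]; ring
  rw [Matrix.mul_apply, Finset.sum_congr rfl fun w _ => hterm w, sum_adjMat_mul, dualAdjMat,
    Matrix.mul_diagonal, ← sum_spin, Finset.mul_sum]
  refine Finset.sum_congr rfl fun k _ => ?_
  calc -Complex.I * ((wt y : ℂ) - wt (flipAt y k)) * Pmat D (flipAt y k) z
      = -(Complex.I * Complex.I) * (spin (y k) * spin (y k)) * spin (z k) * Pmat D y z := by
        rw [Pmat_flipAt_left, wt_flipAt]; ring
    _ = Pmat D y z * spin (z k) := by
        rw [Complex.I_mul_I, spin_mul_self]; ring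

theorem conjPmat_dualAdjMat (D : ℕ) : conjPmat D (dualAdjMat D) = adjMat D := by
  refine conjPmat_eq_iff.mpr (Matrix.ext fun y z => ?_)
  have hterm : ∀ w, Pmat D y w * adjMat D w z = adjMat D z w * Pmat D y w := fun w => by
    rw [adjMat_comm w z, mul_comm]
  rw [dualAdjMat, Matrix.diagonal_mul, Matrix.mul_apply,
    Finset.sum_congr rfl fun w _ => hterm w, sum_adjMat_mul, ← sum_spin, Finset.sum_mul]
  simp only [Pmat_flipAt_right]

theorem theta_injective (D : ℕ) : Function.Injective (theta D) := by
  intro i j hij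
  simpa [theta] using hij

theorem Matrix.aeval_diagonal {n R : Type*} [Fintype n] [DecidableEq n] [CommSemiring R]
    (d : n → R) (p : Polynomial R) :
    Polynomial.aeval (diagonal d) p = diagonal fun y => p.eval (d y) := by
  rw [← Matrix.diagonalAlgHom_apply R, Polynomial.aeval_algHom_apply, Polynomial.aeval_pi_apply]
  rfl

theorem Emat_eq_aeval (D i : ℕ) :
    Emat D i = Polynomial.aeval (adjMat D) (Lagrange.basis (Finset.range (D + 1)) (theta D) i) :=
  rfl

theorem wt_le {D : ℕ} (y : Vtx D) : wt y ≤ D :=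
  (Finset.card_filter_le _ _).trans_eq (Finset.card_fin D)

theorem EstarMat_eq_aeval {D i : ℕ} (hi : i ≤ D) :
    EstarMat D i =
      Polynomial.aeval (dualAdjMat D) (Lagrange.basis (Finset.range (D + 1)) (theta D) i) := by
  have hmem : ∀ j, j ≤ D → j ∈ Finset.range (D + 1) := fun j hj => Finset.mem_range.mpr (by omega)
  rw [dualAdjMat, Matrix.aeval_diagonal, EstarMat]
  congr 1
  funext y
  change _ = (Lagrange.basis _ (theta D) i).eval (theta D (wt y))
  split_ifs with hy
  · rw [hy, Lagrange.eval_basis_self (theta_injective D).injOn (hmem i hi)]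
  · rw [Lagrange.eval_basis_of_ne (Ne.symm hy) (hmem _ (wt_le y))]

theorem conjPmat_EepsMat {D i : ℕ} (hi : i ≤ D) : conjPmat D (EepsMat D i) = EstarMat D i := by
  rw [← conjPmat_Emat, Emat_eq_aeval, ← Polynomial.aeval_algHom_apply, conjPmat_adjMat,
    ← Polynomial.aeval_algHom_apply, conjPmat_imagAdjMat, EstarMat_eq_aeval hi]

theorem natAbs_wt_sub_eq_one_of_adjMat_ne_zero {D : ℕ} {y z : Vtx D} (hyz : adjMat D y z ≠ 0) :
    ((wt y : ℤ) - wt z).natAbs = 1 := by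
  obtain ⟨k, rfl⟩ : ∃ k, z = flipAt y k := by
    by_contra hk
    exact hyz (by rw [adjMat_apply, if_neg hk])
  exact natAbs_wt_sub_wt_flipAt y k

theorem exists_adjMat_eq_one_of_lt {D h : ℕ} (hh : h < D) :
    ∃ y z : Vtx D, wt y = h ∧ wt z = h + 1 ∧ adjMat D y z = 1 := by
  obtain ⟨t, -, ht⟩ :=
    Finset.exists_subset_card_eq (s := (Finset.univ : Finset (Fin D))) (n := h + 1)
      (by simpa using hh)
  obtain ⟨k, hk⟩ : t.Nonempty := Finset.card_pos.mp (by omega)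
  let z : Vtx D := fun l => decide (l ∈ t)
  have hz : wt z = h + 1 := by simpa [wt, z] using ht
  refine ⟨flipAt z k, z, ?_, hz, ?_⟩
  · have := wt_flipAt_of_true z k (by simpa [z] using hk)
    omega
  · simpa using adjMat_apply_flipAt (flipAt z k) k

theorem imagAdjMat_apply_eq_zero_iff {D : ℕ} (y z : Vtx D) :
    imagAdjMat D y z = 0 ↔ adjMat D y z = 0 := by
  refine ⟨fun himag => by_contra fun hadj => ?_,
    fun hadj => by rw [imagAdjMat_apply, hadj, mul_zero]⟩
  have hwt := natAbs_wt_sub_eq_one_of_adjMat_ne_zero hadj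
  have hne : (wt y : ℂ) - wt z ≠ 0 := sub_ne_zero.mpr (by norm_cast; omega)
  rw [imagAdjMat_apply] at himag
  simp_all

theorem EstarMat_mul_mul_EstarMat_eq_zero_iff {D h j : ℕ} (M : Matrix (Vtx D) (Vtx D) ℂ) :
    EstarMat D h * M * EstarMat D j = 0 ↔ ∀ y z, wt y = h → wt z = j → M y z = 0 := by
  rw [← Matrix.ext_iff]
  simp only [EstarMat, Matrix.diagonal_mul, Matrix.mul_diagonal, Matrix.zero_apply, ite_mul,
    one_mul, zero_mul, mul_ite, mul_one, mul_zero, ite_eq_right_iff]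
  exact forall₂_congr fun y z => ⟨fun H hy hz => H hz hy, fun H hz hy => H hy hz⟩

theorem EstarMat_adjMat_EstarMat_eq_zero_iff {D h j : ℕ} (hh : h ≤ D) (hj : j ≤ D) :
    EstarMat D h * adjMat D * EstarMat D j = 0 ↔ ((h : ℤ) - j).natAbs ≠ 1 := by
  rw [EstarMat_mul_mul_EstarMat_eq_zero_iff]
  constructor
  · intro hzero hone
    rcases (by omega : j = h + 1 ∨ h = j + 1) with rfl | rfl
    · obtain ⟨y, z, hy, hz, hyz⟩ := exists_adjMat_eq_one_of_lt (by omega : h < D)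
      simpa [hyz] using hzero y z hy hz
    · obtain ⟨y, z, hy, hz, hyz⟩ := exists_adjMat_eq_one_of_lt (by omega : j < D)
      simpa [adjMat_comm, hyz] using hzero z y hz hy
  · rintro hne y z rfl rfl
    exact not_not.mp (mt natAbs_wt_sub_eq_one_of_adjMat_ne_zero hne)

theorem EstarMat_imagAdjMat_EstarMat_eq_zero_iff {D h j : ℕ} (hh : h ≤ D) (hj : j ≤ D) :
    EstarMat D h * imagAdjMat D * EstarMat D j = 0 ↔ ((h : ℤ) - j).natAbs ≠ 1 := by
  simp only [EstarMat_mul_mul_EstarMat_eq_zero_iff, imagAdjMat_apply_eq_zero_iff]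
  rw [← EstarMat_mul_mul_EstarMat_eq_zero_iff, EstarMat_adjMat_EstarMat_eq_zero_iff hh hj]

theorem vanishing_equivalences_general (D : ℕ) (h j : ℕ) (hh : h ≤ D) (hj : j ≤ D) :
    (((h : ℤ) - (j : ℤ)).natAbs ≠ 1 ↔ Emat D h * imagAdjMat D * Emat D j = 0) ∧
    (((h : ℤ) - (j : ℤ)).natAbs ≠ 1 ↔ EstarMat D h * imagAdjMat D * EstarMat D j = 0) ∧
    (((h : ℤ) - (j : ℤ)).natAbs ≠ 1 ↔ EepsMat D h * adjMat D * EepsMat D j = 0) ∧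
    (((h : ℤ) - (j : ℤ)).natAbs ≠ 1 ↔ EepsMat D h * dualAdjMat D * EepsMat D j = 0) := by
  have hinj := (conjPmat D).injective
  refine ⟨?_, (EstarMat_imagAdjMat_EstarMat_eq_zero_iff hh hj).symm, ?_, ?_⟩
  · rw [← map_eq_zero_iff _ hinj, ← map_eq_zero_iff _ hinj]
    simp only [map_mul, conjPmat_Emat, conjPmat_imagAdjMat, conjPmat_EepsMat hh,
      conjPmat_EepsMat hj, conjPmat_dualAdjMat, EstarMat_adjMat_EstarMat_eq_zero_iff hh hj]
  · rw [← map_eq_zero_iff _ hinj]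
    simp only [map_mul, conjPmat_adjMat, conjPmat_EepsMat hh, conjPmat_EepsMat hj,
      EstarMat_imagAdjMat_EstarMat_eq_zero_iff hh hj]
  · rw [← map_eq_zero_iff _ hinj]
    simp only [map_mul, conjPmat_dualAdjMat, conjPmat_EepsMat hh, conjPmat_EepsMat hj,
      EstarMat_adjMat_EstarMat_eq_zero_iff hh hj]

/-- For `0 ≤ h, j ≤ D` the following are equivalent: (i) `|h - j| ≠ 1`;
(ii) `E_h Aᵉ E_j = 0`; (iii) `E*_h Aᵉ E*_j = 0`; (iv) `Eᵉ_h A Eᵉ_j = 0`;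
(v) `Eᵉ_h A* Eᵉ_j = 0`. -/
theorem vanishing_equivalences (D : ℕ) (hD : 0 < D) (h j : ℕ) (hh : h ≤ D) (hj : j ≤ D) :
    (((h : ℤ) - (j : ℤ)).natAbs ≠ 1 ↔ Emat D h * imagAdjMat D * Emat D j = 0) ∧
    (((h : ℤ) - (j : ℤ)).natAbs ≠ 1 ↔ EstarMat D h * imagAdjMat D * EstarMat D j = 0) ∧
    (((h : ℤ) - (j : ℤ)).natAbs ≠ 1 ↔ EepsMat D h * adjMat D * EepsMat D j = 0) ∧
    (((h : ℤ) - (j : ℤ)).natAbs ≠ 1 ↔ EepsMat D h * dualAdjMat D * EepsMat D j = 0) :=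
  vanishing_equivalences_general D h j hh hj
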